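/- arXiv:2410.13476 — 4 statements merged into one kernel-verified Lean document; each statement's English description precedes it below -/
import Mathlib

section
/- Let α : ℝ → ℝ² be a regular C³ plane curve defined on an open interval I ⊆ ℝ, and let f : I → ℝ be a C³ function. Define γ : I → ℝ³ by γ(t) = (α₁(t), α₂(t), f(t)), and suppose that ⟨α''(t), Jα'(t)⟩² + ‖f''(t)·α'(t) − f'(t)·α''(t)‖² ≠ 0 at t. Then the torsion τ(t) = det(γ'(t), γ''(t), γ'''(t)) / ‖γ'(t) × γ''(t)‖² of γ satisfies τ = ( f'''·⟨α'', Jα'⟩ + f''·⟨−Jα', α'''⟩ + f'·⟨Jα'', α'''⟩ ) / ( ⟨α'', Jα'⟩² + ‖f''·α' − f'·α''‖² ). -/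
open scoped RealInnerProductSpace

noncomputable section

/-- The Euclidean plane `ℝ²`. -/
abbrev E2 := EuclideanSpace ℝ (Fin 2)
/-- Euclidean 3-space `ℝ³`. -/
abbrev E3 := EuclideanSpace ℝ (Fin 3)

/-- The point `(a, b)` of `ℝ²`. -/
def mk2 (a b : ℝ) : E2 := (WithLp.equiv 2 (Fin 2 → ℝ)).symm ![a, b]
/-- The point `(a, b, c)` of `ℝ³`. -/
def mk3 (a b c : ℝ) : E3 := (WithLp.equiv 2 (Fin 3 → ℝ)).symm ![a, b, c]

/-- The complex structure `J(p₁, p₂) = (-p₂, p₁)`, rotation by `π/2` counterclockwise. -/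
def Jc (v : E2) : E2 := mk2 (-(v 1)) (v 0)
/-- The embedding `ι : ℝ² → ℝ³`, `ι(p₁, p₂) = (p₁, p₂, 0)`. -/
def emb (v : E2) : E3 := mk3 (v 0) (v 1) 0
/-- The unit vector `e₃ = (0, 0, 1)`. -/
def e₃ : E3 := mk3 0 0 1
/-- The cross product in `ℝ³`. -/
def cross3 (u v : E3) : E3 :=
  mk3 (u 1 * v 2 - u 2 * v 1) (u 2 * v 0 - u 0 * v 2) (u 0 * v 1 - u 1 * v 0)

/-! The derivatives of `γ = (α₁, α₂, f)` are `(α₁⁽ᵏ⁾, α₂⁽ᵏ⁾, f⁽ᵏ⁾)`, so the torsion formula is a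
polynomial identity in the coordinates of `α', α'', α'''` and `f', f'', f'''`. Expanding the
triple product along the third coordinate gives the numerator; the cross product `γ' × γ''` has
vertical component `⟨α'', Jα'⟩` and horizontal part `−J(f''α' − f'α'')`, which gives the
denominator. -/

lemma inner_cross3_mk3 (a b c : E2) (x y z : ℝ) :
    ⟪cross3 (mk3 (a 0) (a 1) x) (mk3 (b 0) (b 1) y), mk3 (c 0) (c 1) z⟫ =
      z * ⟪b, Jc a⟫ + y * ⟪-Jc a, c⟫ + x * ⟪Jc b, c⟫ := by
  simp only [cross3, Jc, mk2, mk3, PiLp.inner_apply, RCLike.inner_apply, conj_trivial,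
    Fin.sum_univ_two, Fin.sum_univ_three, WithLp.equiv_symm_apply, PiLp.toLp_apply,
    Matrix.cons_val_zero, Matrix.cons_val_one, Matrix.cons_val_two, Matrix.head_cons,
    Matrix.tail_cons, PiLp.neg_apply]
  ring

lemma norm_cross3_mk3_sq (a b : E2) (x y : ℝ) :
    ‖cross3 (mk3 (a 0) (a 1) x) (mk3 (b 0) (b 1) y)‖ ^ 2 =
      ⟪b, Jc a⟫ ^ 2 + ‖y • a - x • b‖ ^ 2 := by
  simp only [← real_inner_self_eq_norm_sq, cross3, Jc, mk2, mk3, PiLp.inner_apply,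
    RCLike.inner_apply, conj_trivial, Fin.sum_univ_two, Fin.sum_univ_three,
    WithLp.equiv_symm_apply, PiLp.toLp_apply, Matrix.cons_val_zero, Matrix.cons_val_one,
    Matrix.cons_val_two, Matrix.head_cons, Matrix.tail_cons, PiLp.sub_apply, PiLp.smul_apply,
    smul_eq_mul]
  ring

lemma hasDerivAt_mk3 {a b c : ℝ → ℝ} {a' b' c' t : ℝ}
    (ha : HasDerivAt a a' t) (hb : HasDerivAt b b' t) (hc : HasDerivAt c c' t) :
    HasDerivAt (fun s => mk3 (a s) (b s) (c s)) (mk3 a' b' c') t := by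
  have h : HasDerivAt (fun s => ![a s, b s, c s]) ![a', b', c'] t := by
    refine hasDerivAt_pi.2 fun i => ?_
    fin_cases i
    · simpa using ha
    · simpa using hb
    · simpa using hc
  exact (PiLp.continuousLinearEquiv 2 ℝ (fun _ : Fin 3 => ℝ)).symm.hasFDerivAt.comp_hasDerivAt
    t h

def cylinderCurve (α : ℝ → E2) (f : ℝ → ℝ) (s : ℝ) : E3 := mk3 (α s 0) (α s 1) (f s)

lemma hasDerivAt_cylinderCurve {α : ℝ → E2} {f : ℝ → ℝ} {α' : E2} {f' t : ℝ}
    (hα : HasDerivAt α α' t) (hf : HasDerivAt f f' t) :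
    HasDerivAt (cylinderCurve α f) (mk3 (α' 0) (α' 1) f') t :=
  hasDerivAt_mk3 ((EuclideanSpace.proj 0).hasFDerivAt.comp_hasDerivAt t hα :)
    ((EuclideanSpace.proj 1).hasFDerivAt.comp_hasDerivAt t hα :) hf

lemma ContDiffOn.iterate_deriv_of_isOpen {F : Type*} [NormedAddCommGroup F] [NormedSpace ℝ F]
    {g : ℝ → F} {U : Set ℝ} (hU : IsOpen U) {n k : ℕ} (hg : ContDiffOn ℝ (n + k) g U) :
    ContDiffOn ℝ n (deriv^[k] g) U := by
  induction k generalizing g with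
  | zero => simpa using hg
  | succ k ih =>
    rw [Function.iterate_succ_apply]
    exact ih (hg.deriv_of_isOpen hU (by push_cast; rw [add_assoc]))

lemma eqOn_iterate_deriv_cylinderCurve {α : ℝ → E2} {f : ℝ → ℝ} {U : Set ℝ} (hU : IsOpen U)
    {n : ℕ} (hα : ContDiffOn ℝ n α U) (hf : ContDiffOn ℝ n f U) {k : ℕ} (hk : k ≤ n) :
    U.EqOn (deriv^[k] (cylinderCurve α f)) (cylinderCurve (deriv^[k] α) (deriv^[k] f)) := by
  induction k with
  | zero => exact fun _ _ => rfl
  | succ k ih =>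
    obtain ⟨m, rfl⟩ := Nat.exists_eq_add_of_lt hk
    have hαk : ContDiffOn ℝ (m + 1) (deriv^[k] α) U :=
      ContDiffOn.iterate_deriv_of_isOpen hU (by convert hα using 2; push_cast; ring)
    have hfk : ContDiffOn ℝ (m + 1) (deriv^[k] f) U :=
      ContDiffOn.iterate_deriv_of_isOpen hU (by convert hf using 2; push_cast; ring)
    intro s hs
    have hαd := ((hαk.differentiableOn (by simp)).differentiableAt (hU.mem_nhds hs)).hasDerivAt
    have hfd := ((hfk.differentiableOn (by simp)).differentiableAt (hU.mem_nhds hs)).hasDerivAt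
    rw [Function.iterate_succ_apply', ((ih (by omega)).deriv hU) hs,
      (hasDerivAt_cylinderCurve hαd hfd).deriv]
    simp only [cylinderCurve, Function.iterate_succ_apply']

theorem cylindrical_curve_torsion_general
    (I : Set ℝ) (hIopen : IsOpen I)
    (α : ℝ → E2) (f : ℝ → ℝ) (γ : ℝ → E3)
    (hα : ContDiffOn ℝ 3 α I)
    (hf : ContDiffOn ℝ 3 f I)
    (hγ : ∀ t, γ t = mk3 (α t 0) (α t 1) (f t))
    (t : ℝ) (ht : t ∈ I) :
    ⟪cross3 (deriv γ t) (deriv (deriv γ) t), deriv (deriv (deriv γ)) t⟫ /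
        ‖cross3 (deriv γ t) (deriv (deriv γ) t)‖ ^ 2 =
      (deriv (deriv (deriv f)) t * ⟪deriv (deriv α) t, Jc (deriv α t)⟫ +
          deriv (deriv f) t * ⟪-(Jc (deriv α t)), deriv (deriv (deriv α)) t⟫ +
          deriv f t * ⟪Jc (deriv (deriv α) t), deriv (deriv (deriv α)) t⟫) /
        (⟪deriv (deriv α) t, Jc (deriv α t)⟫ ^ 2 +
          ‖deriv (deriv f) t • deriv α t - deriv f t • deriv (deriv α) t‖ ^ 2) := by
  obtain rfl : γ = cylinderCurve α f := funext hγ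
  have hderiv {k : ℕ} (hk : k ≤ 3) :=
    eqOn_iterate_deriv_cylinderCurve hIopen (n := 3) hα hf hk ht
  have h1 : deriv (cylinderCurve α f) t = cylinderCurve (deriv α) (deriv f) t :=
    hderiv (k := 1) (by norm_num)
  have h2 : deriv (deriv (cylinderCurve α f)) t =
      cylinderCurve (deriv (deriv α)) (deriv (deriv f)) t :=
    hderiv (k := 2) (by norm_num)
  have h3 : deriv (deriv (deriv (cylinderCurve α f))) t =
      cylinderCurve (deriv (deriv (deriv α))) (deriv (deriv (deriv f))) t :=
    hderiv (k := 3) (by norm_num)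
  rw [h1, h2, h3]
  exact congr_arg₂ (· / ·) (inner_cross3_mk3 _ _ _ _ _ _) (norm_cross3_mk3_sq _ _ _ _)

/-- For a regular `C³` plane curve `α` on an open interval `I` and a `C³`
function `f`, the torsion `τ = det(γ', γ'', γ''') / ‖γ' × γ''‖²` of the cylindrical curve
`γ(t) = (α₁(t), α₂(t), f(t))` is given by
`τ = (f'''⟨α'', Jα'⟩ + f''⟨−Jα', α'''⟩ + f'⟨Jα'', α'''⟩) / (⟨α'', Jα'⟩² + ‖f''α' − f'α''‖²)`. -/
theorem cylindrical_curve_torsion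
    (I : Set ℝ) (hIopen : IsOpen I) (hIconn : I.OrdConnected)
    (α : ℝ → E2) (f : ℝ → ℝ) (γ : ℝ → E3)
    (hα : ContDiffOn ℝ 3 α I) (hreg : ∀ t ∈ I, deriv α t ≠ 0)
    (hf : ContDiffOn ℝ 3 f I)
    (hγ : ∀ t, γ t = mk3 (α t 0) (α t 1) (f t))
    (t : ℝ) (ht : t ∈ I)
    (hden : ⟪deriv (deriv α) t, Jc (deriv α t)⟫ ^ 2 +
        ‖deriv (deriv f) t • deriv α t - deriv f t • deriv (deriv α) t‖ ^ 2 ≠ 0) :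
    ⟪cross3 (deriv γ t) (deriv (deriv γ) t), deriv (deriv (deriv γ)) t⟫ /
        ‖cross3 (deriv γ t) (deriv (deriv γ) t)‖ ^ 2 =
      (deriv (deriv (deriv f)) t * ⟪deriv (deriv α) t, Jc (deriv α t)⟫ +
          deriv (deriv f) t * ⟪-(Jc (deriv α t)), deriv (deriv (deriv α)) t⟫ +
          deriv f t * ⟪Jc (deriv (deriv α) t), deriv (deriv (deriv α)) t⟫) /
        (⟪deriv (deriv α) t, Jc (deriv α t)⟫ ^ 2 +
          ‖deriv (deriv f) t • deriv α t - deriv f t • deriv (deriv α) t‖ ^ 2) :=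
  cylindrical_curve_torsion_general I hIopen α f γ hα hf hγ t ht
end
end

section
/- Let α : ℝ → ℝ² be a regular C³ plane curve on an open interval I with signed curvature K, let f : I → ℝ be of class C², and define γ : I → ℝ³ by γ(t) = (α₁(t), α₂(t), f(t)). Denote by ι : ℝ² → ℝ³ the embedding ι(p₁,p₂) = (p₁,p₂,0) and e₃ = (0,0,1). Then for every t ∈ I, the cross product of the first two derivatives of γ satisfies γ'(t) × γ''(t) = ṡ(t)³ K(t) · e₃ − ι( J( f''(t)·α'(t) − f'(t)·α''(t) ) ), where ṡ(t) = ‖α'(t)‖. -/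
open scoped RealInnerProductSpace

noncomputable section

/-!
Both derivatives of `γ` are computed componentwise: `γ' = (α', f')` and `γ'' = (α'', f'')`.
For `a, b ∈ ℝ²` and `x, y ∈ ℝ`, the cross product `(a, x) × (b, y)` has vertical component
`det(a, b) = ⟪b, J a⟫` and horizontal part `-ι(J(y a - x b))`; with `a = α'`, `b = α''` the
vertical component is `ṡ³K` by the definition of `K`.
-/

theorem HasDerivAt.piLp_apply {𝕜 ι : Type*} [NontriviallyNormedField 𝕜] [Fintype ι]
    {E : ι → Type*} [∀ i, NormedAddCommGroup (E i)] [∀ i, NormedSpace 𝕜 (E i)]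
    {p : ENNReal} [Fact (1 ≤ p)] {φ : 𝕜 → PiLp p E} {φ' : PiLp p E} {t : 𝕜}
    (h : HasDerivAt φ φ' t) (i : ι) :
    HasDerivAt (fun s => φ s i) (φ' i) t :=
  (PiLp.hasFDerivAt_apply p (φ t) i).comp_hasDerivAt t h

theorem hasDerivAt_mk3_s3 {g₀ g₁ g₂ : ℝ → ℝ} {d₀ d₁ d₂ t : ℝ}
    (h₀ : HasDerivAt g₀ d₀ t) (h₁ : HasDerivAt g₁ d₁ t) (h₂ : HasDerivAt g₂ d₂ t) :
    HasDerivAt (fun s => mk3 (g₀ s) (g₁ s) (g₂ s)) (mk3 d₀ d₁ d₂) t := by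
  have hvec : HasDerivAt (fun s => ![g₀ s, g₁ s, g₂ s]) ![d₀, d₁, d₂] t := by
    refine hasDerivAt_pi.2 fun i => ?_
    fin_cases i <;> assumption
  exact (PiLp.hasFDerivAt_toLp 2 _).comp_hasDerivAt t hvec

theorem deriv_mk3_cylinder {α : ℝ → E2} {f : ℝ → ℝ} {t : ℝ}
    (hα : DifferentiableAt ℝ α t) (hf : DifferentiableAt ℝ f t) :
    deriv (fun s => mk3 (α s 0) (α s 1) (f s)) t =
      mk3 (deriv α t 0) (deriv α t 1) (deriv f t) :=
  (hasDerivAt_mk3_s3 (hα.hasDerivAt.piLp_apply 0) (hα.hasDerivAt.piLp_apply 1)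
    hf.hasDerivAt).deriv

theorem cross3_mk3_mk3 (a b : E2) (x y : ℝ) :
    cross3 (mk3 (a 0) (a 1) x) (mk3 (b 0) (b 1) y) =
      ⟪b, Jc a⟫ • e₃ - emb (Jc (y • a - x • b)) := by
  ext i
  fin_cases i <;>
    simp [cross3, mk3, mk2, Jc, emb, e₃, PiLp.inner_apply, Fin.sum_univ_two] <;> ring

theorem Jc_zero : Jc 0 = 0 := by
  ext i
  fin_cases i <;> simp [Jc, mk2]

theorem norm_pow_three_mul_inner_Jc_div (v w : E2) :
    ‖v‖ ^ 3 * (⟪w, Jc v⟫ / ‖v‖ ^ 3) = ⟪w, Jc v⟫ :=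
  mul_div_cancel_of_imp' fun h => by
    rw [norm_eq_zero.1 (pow_eq_zero_iff three_ne_zero |>.1 h), Jc_zero, inner_zero_right]

theorem ContDiffOn.differentiableAt_deriv {F : Type*} [NormedAddCommGroup F] [NormedSpace ℝ F]
    {g : ℝ → F} {s : Set ℝ} {n : WithTop ℕ∞} (hg : ContDiffOn ℝ n g s) (hs : IsOpen s)
    (hn : 2 ≤ n) {t : ℝ} (ht : t ∈ s) : DifferentiableAt ℝ (deriv g) t :=
  ((hg.deriv_of_isOpen hs (by simpa [one_add_one_eq_two] using hn)).contDiffAt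
    (hs.mem_nhds ht)).differentiableAt one_ne_zero

theorem cylindrical_curve_cross_product_general
    (I : Set ℝ) (hIopen : IsOpen I)
    (α : ℝ → E2) (f : ℝ → ℝ) (γ : ℝ → E3) (K : ℝ → ℝ)
    (hα : ContDiffOn ℝ 3 α I)
    (hK : ∀ t ∈ I, K t = ⟪deriv (deriv α) t, Jc (deriv α t)⟫ / ‖deriv α t‖ ^ 3)
    (hf : ContDiffOn ℝ 2 f I)
    (hγ : ∀ t, γ t = mk3 (α t 0) (α t 1) (f t)) :
    ∀ t ∈ I,
      cross3 (deriv γ t) (deriv (deriv γ) t) =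
        (‖deriv α t‖ ^ 3 * K t) • e₃ -
          emb (Jc (deriv (deriv f) t • deriv α t - deriv f t • deriv (deriv α) t)) := by
  intro t ht
  have hγ' : deriv γ =ᶠ[nhds t] fun s => mk3 (deriv α s 0) (deriv α s 1) (deriv f s) := by
    filter_upwards [hIopen.mem_nhds ht] with s hs
    rw [funext hγ]
    exact deriv_mk3_cylinder ((hα.differentiableOn (by norm_num)).differentiableAt
      (hIopen.mem_nhds hs)) ((hf.differentiableOn (by norm_num)).differentiableAt
      (hIopen.mem_nhds hs))
  rw [hγ'.self_of_nhds, hγ'.deriv_eq, deriv_mk3_cylinder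
    (hα.differentiableAt_deriv hIopen (by norm_num) ht)
    (hf.differentiableAt_deriv hIopen le_rfl ht), cross3_mk3_mk3, hK t ht,
    norm_pow_three_mul_inner_Jc_div]

/-- For a regular `C³` plane curve `α` with signed curvature `K` and a `C²`
function `f`, the cylindrical curve `γ(t) = (α₁(t), α₂(t), f(t))` satisfies
`γ' × γ'' = ṡ³K·e₃ − ι(J(f''·α' − f'·α''))` where `ṡ = ‖α'‖`. -/
theorem cylindrical_curve_cross_product
    (I : Set ℝ) (hIopen : IsOpen I) (hIconn : I.OrdConnected)
    (α : ℝ → E2) (f : ℝ → ℝ) (γ : ℝ → E3) (K : ℝ → ℝ)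
    (hα : ContDiffOn ℝ 3 α I) (hreg : ∀ t ∈ I, deriv α t ≠ 0)
    (hK : ∀ t ∈ I, K t = ⟪deriv (deriv α) t, Jc (deriv α t)⟫ / ‖deriv α t‖ ^ 3)
    (hf : ContDiffOn ℝ 2 f I)
    (hγ : ∀ t, γ t = mk3 (α t 0) (α t 1) (f t)) :
    ∀ t ∈ I,
      cross3 (deriv γ t) (deriv (deriv γ) t) =
        (‖deriv α t‖ ^ 3 * K t) • e₃ -
          emb (Jc (deriv (deriv f) t • deriv α t - deriv f t • deriv (deriv α) t)) :=
  cylindrical_curve_cross_product_general I hIopen α f γ K hα hK hf hγ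
end
end

section
/- Let α : ℝ → ℝ² be a regular C³ plane curve on an open interval I with signed curvature K, let f : I → ℝ be of class C², and define γ : I → ℝ³ by γ(t) = (α₁(t), α₂(t), f(t)). Then for every t ∈ I, ‖γ'(t) × γ''(t)‖ = √( ṡ(t)⁶ K(t)² + ‖f''(t)·α'(t) − f'(t)·α''(t)‖² ), where ṡ(t) = ‖α'(t)‖. -/
open scoped RealInnerProductSpace

noncomputable section

/-!
Writing `γ' = (α', f')` and `γ'' = (α'', f'')`, the third component of `γ' × γ''` is the planar
cross product `⟪α'', Jα'⟫ = ṡ³K`, and its first two components form the vector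
`J(f'' α' - f' α'')` up to sign, whose norm is `‖f'' α' - f' α''‖`.
-/

lemma mk3_eq_sum_single (a b c : ℝ) :
    mk3 a b c = a • EuclideanSpace.single 0 1 + b • EuclideanSpace.single 1 1
      + c • EuclideanSpace.single 2 1 := by
  ext i; fin_cases i <;> simp [mk3]

lemma HasDerivAt.euclidean_apply {n : Type*} [Fintype n] {F : ℝ → EuclideanSpace ℝ n}
    {F' : EuclideanSpace ℝ n} {t : ℝ} (hF : HasDerivAt F F' t) (i : n) :
    HasDerivAt (fun s => F s i) (F' i) t :=
  (EuclideanSpace.proj (𝕜 := ℝ) i).hasFDerivAt.comp_hasDerivAt t hF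

lemma inner_Jc (v w : E2) : ⟪w, Jc v⟫ = v 0 * w 1 - v 1 * w 0 := by
  simp only [Jc, mk2, WithLp.equiv_symm_apply, PiLp.inner_apply, Fin.sum_univ_two,
    RCLike.inner_apply, conj_trivial, Matrix.cons_val_zero, Matrix.cons_val_one]
  ring

lemma norm_mk3 (a b c : ℝ) : ‖mk3 a b c‖ = √(a ^ 2 + b ^ 2 + c ^ 2) := by
  simp [EuclideanSpace.norm_eq, Fin.sum_univ_three, mk3]

lemma norm_sq_E2 (x : E2) : ‖x‖ ^ 2 = x 0 ^ 2 + x 1 ^ 2 := by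
  simp [EuclideanSpace.real_norm_sq_eq, Fin.sum_univ_two]

lemma norm_cross3_mk3 (a b : E2) (p q : ℝ) :
    ‖cross3 (mk3 (a 0) (a 1) p) (mk3 (b 0) (b 1) q)‖ =
      √(⟪b, Jc a⟫ ^ 2 + ‖q • a - p • b‖ ^ 2) := by
  rw [cross3, norm_mk3, inner_Jc, norm_sq_E2]
  simp only [mk3, WithLp.equiv_symm_apply, Matrix.cons_val, PiLp.sub_apply, PiLp.smul_apply,
    smul_eq_mul]
  ring_nf

lemma norm_pow_six_mul_sq_inner_Jc_div (v w : E2) :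
    ‖v‖ ^ 6 * (⟪w, Jc v⟫ / ‖v‖ ^ 3) ^ 2 = ⟪w, Jc v⟫ ^ 2 := by
  rcases eq_or_ne v 0 with rfl | hv
  · simp [inner_Jc]
  · field_simp

lemma hasDerivAt_cylinder {α : ℝ → E2} {f : ℝ → ℝ} {α' : E2} {f' t : ℝ}
    (hα : HasDerivAt α α' t) (hf : HasDerivAt f f' t) :
    HasDerivAt (fun s => mk3 (α s 0) (α s 1) (f s)) (mk3 (α' 0) (α' 1) f') t :=
  hasDerivAt_mk3 (hα.euclidean_apply 0) (hα.euclidean_apply 1) hf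

lemma ContDiffOn.differentiableAt_deriv_of_isOpen {𝕜 F : Type*} [NontriviallyNormedField 𝕜]
    [NormedAddCommGroup F] [NormedSpace 𝕜 F] {g : 𝕜 → F} {s : Set 𝕜} {t : 𝕜} {n : WithTop ℕ∞}
    (hg : ContDiffOn 𝕜 n g s) (hn : 2 ≤ n) (hs : IsOpen s) (ht : t ∈ s) :
    DifferentiableAt 𝕜 (deriv g) t :=
  ((hg.deriv_of_isOpen hs (m := 1) hn).contDiffAt (hs.mem_nhds ht)).differentiableAt one_ne_zero

theorem cylindrical_curve_cross_product_norm_general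
    (I : Set ℝ) (hIopen : IsOpen I)
    (α : ℝ → E2) (f : ℝ → ℝ) (γ : ℝ → E3) (K : ℝ → ℝ)
    (hα : ContDiffOn ℝ 3 α I)
    (hK : ∀ t ∈ I, K t = ⟪deriv (deriv α) t, Jc (deriv α t)⟫ / ‖deriv α t‖ ^ 3)
    (hf : ContDiffOn ℝ 2 f I)
    (hγ : ∀ t, γ t = mk3 (α t 0) (α t 1) (f t)) :
    ∀ t ∈ I,
      ‖cross3 (deriv γ t) (deriv (deriv γ) t)‖ =
        Real.sqrt (‖deriv α t‖ ^ 6 * K t ^ 2 +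
          ‖deriv (deriv f) t • deriv α t - deriv f t • deriv (deriv α) t‖ ^ 2) := by
  intro t ht
  have hγ_eq : γ = fun s => mk3 (α s 0) (α s 1) (f s) := funext hγ
  have hγ' : ∀ s ∈ I, deriv γ s = mk3 (deriv α s 0) (deriv α s 1) (deriv f s) := by
    intro s hs
    rw [hγ_eq]
    exact (hasDerivAt_cylinder
      ((hα.contDiffAt (hIopen.mem_nhds hs)).differentiableAt (by norm_num)).hasDerivAt
      ((hf.contDiffAt (hIopen.mem_nhds hs)).differentiableAt (by norm_num)).hasDerivAt).deriv
  have hγ'' : deriv (deriv γ) t =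
      mk3 (deriv (deriv α) t 0) (deriv (deriv α) t 1) (deriv (deriv f) t) := by
    rw [Filter.EventuallyEq.deriv_eq (Filter.eventually_of_mem (hIopen.mem_nhds ht) hγ')]
    exact (hasDerivAt_cylinder
      (hα.differentiableAt_deriv_of_isOpen (by norm_num) hIopen ht).hasDerivAt
      (hf.differentiableAt_deriv_of_isOpen le_rfl hIopen ht).hasDerivAt).deriv
  rw [hγ' t ht, hγ'', norm_cross3_mk3, hK t ht, norm_pow_six_mul_sq_inner_Jc_div]

/-- For a regular `C³` plane curve `α` with signed curvature `K` and a `C²`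
function `f`, the cylindrical curve `γ(t) = (α₁(t), α₂(t), f(t))` satisfies
`‖γ' × γ''‖ = √(ṡ⁶K² + ‖f''·α' − f'·α''‖²)` where `ṡ = ‖α'‖`. -/
theorem cylindrical_curve_cross_product_norm
    (I : Set ℝ) (hIopen : IsOpen I) (hIconn : I.OrdConnected)
    (α : ℝ → E2) (f : ℝ → ℝ) (γ : ℝ → E3) (K : ℝ → ℝ)
    (hα : ContDiffOn ℝ 3 α I) (hreg : ∀ t ∈ I, deriv α t ≠ 0)
    (hK : ∀ t ∈ I, K t = ⟪deriv (deriv α) t, Jc (deriv α t)⟫ / ‖deriv α t‖ ^ 3)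
    (hf : ContDiffOn ℝ 2 f I)
    (hγ : ∀ t, γ t = mk3 (α t 0) (α t 1) (f t)) :
    ∀ t ∈ I,
      ‖cross3 (deriv γ t) (deriv (deriv γ) t)‖ =
        Real.sqrt (‖deriv α t‖ ^ 6 * K t ^ 2 +
          ‖deriv (deriv f) t • deriv α t - deriv f t • deriv (deriv α) t‖ ^ 2) :=
  cylindrical_curve_cross_product_norm_general I hIopen α f γ K hα hK hf hγ
end
end

section
/- Let a, b, n > 0 be constants and let γ : ℝ → ℝ³ be the toroidal helix γ(t) = ( (a + b cos(nt)) cos t, (a + b cos(nt)) sin t, b sin(nt) ). At every t where the curvature κ and torsion τ of γ are nonzero and the denominator D(t) below is nonzero, the focal curve C_γ(t) = γ(t) + (1/κ(t))N(t) + (−κ'(t)/(‖γ'(t)‖κ(t)²τ(t)))B(t) equals ( x_β(t), y_β(t), f̃(t) ), where, with D(t) = (4a²(n²−1) − b²(8n⁴+13n²+3))cos(nt) + b(4a(n⁴−1) − 4a(2n²+1)cos(2nt) + b(n²−1)cos(3nt)): x_β(t) = 4abn²( cos t·(a(n²−1) − b(2n²+1)cos(nt)) + 3bn sin t sin(nt)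 ) / D(t); y_β(t) = 4abn²( sin t·(a(n²−1) − b(2n²+1)cos(nt)) − 3bn cos t sin(nt) ) / D(t); f̃(t) = 2a sin(nt)( −2a²(n²−1) + 4ab(2n²+1)cos(nt) − b²(n²−1)cos(2nt) + b²(11n²+1) ) / D(t). -/
open scoped RealInnerProductSpace

noncomputable section

/-!
Write `v₁, v₂, v₃` for `γ', γ'', γ'''` and `w = v₁ × v₂`. Since `κ = ‖w‖ / ‖v₁‖³`,
`κ² τ = ⟪w, v₃⟫ / ‖v₁‖⁶` and `w' = v₁ × v₃`, the focal point is
`γ + (‖v₁‖² / ‖w‖²) (w × v₁) + ((3 ‖w‖² ⟪v₁, v₂⟫ - ‖v₁‖² ⟪w, v₁ × v₃⟫) / (‖w‖² ⟪w, v₃⟫)) w`,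
an expression that commutes with rotations. The toroidal helix is `R_t β(t)`, where `R_t` is the
rotation by `t` about the `z`-axis and `β(t) = (a + b cos nt, 0, b sin nt)`; its derivatives are
`R_t` applied to the iterates of `β ↦ β' + e₃ × β`, which stay trigonometric polynomials in `nt`.
So everything reduces to polynomial identities in `cos nt, sin nt` modulo `cos² + sin² = 1`, the
key one being `⟪w, v₃⟫ = -(b n / 4) D`.
-/

open Real

@[simp] lemma mk3_apply_zero (x y z : ℝ) : mk3 x y z 0 = x := rfl
@[simp] lemma mk3_apply_one (x y z : ℝ) : mk3 x y z 1 = y := rfl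
@[simp] lemma mk3_apply_two (x y z : ℝ) : mk3 x y z 2 = z := rfl

lemma E3.ext_of_apply {u v : E3} (h0 : u 0 = v 0) (h1 : u 1 = v 1) (h2 : u 2 = v 2) :
    u = v := by
  ext i; fin_cases i <;> assumption

lemma mk3_ext {x y z x' y' z' : ℝ} (h0 : x = x') (h1 : y = y') (h2 : z = z') :
    mk3 x y z = mk3 x' y' z' := by
  rw [h0, h1, h2]

lemma mk3_add (x y z x' y' z' : ℝ) :
    mk3 x y z + mk3 x' y' z' = mk3 (x + x') (y + y') (z + z') := by
  ext i; fin_cases i <;> rfl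

lemma smul_mk3 (r x y z : ℝ) : r • mk3 x y z = mk3 (r * x) (r * y) (r * z) := by
  ext i; fin_cases i <;> rfl

lemma cross3_mk3 (x y z x' y' z' : ℝ) :
    cross3 (mk3 x y z) (mk3 x' y' z') =
      mk3 (y * z' - z * y') (z * x' - x * z') (x * y' - y * x') := rfl

lemma inner_E3 (u v : E3) : ⟪u, v⟫ = u 0 * v 0 + u 1 * v 1 + u 2 * v 2 := by
  simp [PiLp.inner_apply, Fin.sum_univ_three, mul_comm]

lemma inner_mk3 (x y z x' y' z' : ℝ) :
    ⟪mk3 x y z, mk3 x' y' z'⟫ = x * x' + y * y' + z * z' :=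
  inner_E3 _ _

lemma cross3_zero_left (v : E3) : cross3 0 v = 0 := by
  ext i; fin_cases i <;> simp [cross3]

lemma cross3_self (v : E3) : cross3 v v = 0 := by
  ext i; fin_cases i <;> simp [cross3, mul_comm]

lemma cross3_smul_smul (r s : ℝ) (u v : E3) : cross3 (r • u) (s • v) = (r * s) • cross3 u v := by
  simp only [cross3, smul_mk3, PiLp.smul_apply, smul_eq_mul]
  refine mk3_ext ?_ ?_ ?_ <;> ring

lemma hasDerivAt_E3_iff {p : ℝ → E3} {p' : E3} {s : ℝ} :
    HasDerivAt p p' s ↔ ∀ i, HasDerivAt (fun u => p u i) (p' i) s := by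
  refine ⟨fun h i => (PiLp.hasFDerivAt_apply 2 (p s) i).comp_hasDerivAt s h, fun h => ?_⟩
  exact (PiLp.hasFDerivAt_toLp 2 _).comp_hasDerivAt s (hasDerivAt_pi.2 h)

lemma hasDerivAt_mk3_s13 {x y z : ℝ → ℝ} {x' y' z' s : ℝ} (hx : HasDerivAt x x' s)
    (hy : HasDerivAt y y' s) (hz : HasDerivAt z z' s) :
    HasDerivAt (fun u => mk3 (x u) (y u) (z u)) (mk3 x' y' z') s := by
  rw [hasDerivAt_E3_iff]
  intro i
  fin_cases i <;> assumption

lemma HasDerivAt.cross3 {u v : ℝ → E3} {u' v' : E3} {s : ℝ} (hu : HasDerivAt u u' s)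
    (hv : HasDerivAt v v' s) :
    HasDerivAt (fun r => cross3 (u r) (v r)) (cross3 u' (v s) + cross3 (u s) v') s := by
  rw [hasDerivAt_E3_iff] at hu hv
  refine (hasDerivAt_mk3_s13 (((hu 1).mul (hv 2)).sub ((hu 2).mul (hv 1)))
    (((hu 2).mul (hv 0)).sub ((hu 0).mul (hv 2)))
    (((hu 0).mul (hv 1)).sub ((hu 1).mul (hv 0)))).congr_deriv ?_
  simp only [_root_.cross3, mk3_add]
  refine mk3_ext ?_ ?_ ?_ <;> ring

lemma HasDerivAt.norm {F : Type*} [NormedAddCommGroup F] [InnerProductSpace ℝ F] {f : ℝ → F}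
    {f' : F} {s : ℝ} (hf : HasDerivAt f f' s) (h0 : f s ≠ 0) :
    HasDerivAt (fun u => ‖f u‖) (⟪f s, f'⟫ / ‖f s‖) s := by
  have h := hf.norm_sq.sqrt (pow_ne_zero 2 (norm_ne_zero_iff.2 h0))
  simp only [sqrt_sq (norm_nonneg _)] at h
  convert h using 1
  field_simp

section Frenet

variable (γ : ℝ → E3) (t : ℝ)

def curvature : ℝ :=
  ‖cross3 (deriv γ t) (deriv (deriv γ) t)‖ / ‖deriv γ t‖ ^ 3

def torsion : ℝ :=
  ⟪cross3 (deriv γ t) (deriv (deriv γ) t), deriv (deriv (deriv γ)) t⟫ /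
    ‖cross3 (deriv γ t) (deriv (deriv γ) t)‖ ^ 2

def unitTangent : E3 := ‖deriv γ t‖⁻¹ • deriv γ t

def binormal : E3 :=
  ‖cross3 (deriv γ t) (deriv (deriv γ) t)‖⁻¹ • cross3 (deriv γ t) (deriv (deriv γ) t)

def normal : E3 := cross3 (binormal γ t) (unitTangent γ t)

def focalPoint : E3 :=
  γ t + (curvature γ t)⁻¹ • normal γ t +
    (-deriv (curvature γ) t / (‖deriv γ t‖ * curvature γ t ^ 2 * torsion γ t)) • binormal γ t

end Frenet

def focalFormula (x v₁ v₂ v₃ : E3) : E3 :=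
  x + (‖v₁‖ ^ 2 / ‖cross3 v₁ v₂‖ ^ 2) • cross3 (cross3 v₁ v₂) v₁ +
    ((3 * ‖cross3 v₁ v₂‖ ^ 2 * ⟪v₁, v₂⟫ - ‖v₁‖ ^ 2 * ⟪cross3 v₁ v₂, cross3 v₁ v₃⟫) /
      (‖cross3 v₁ v₂‖ ^ 2 * ⟪cross3 v₁ v₂, v₃⟫)) • cross3 v₁ v₂

section

variable {γ : ℝ → E3} {t : ℝ} {v₁ v₂ v₃ : E3}

lemma hasDerivAt_curvature (h₁ : HasDerivAt γ v₁ t) (h₂ : HasDerivAt (deriv γ) v₂ t)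
    (h₃ : HasDerivAt (deriv (deriv γ)) v₃ t) (hw : cross3 v₁ v₂ ≠ 0) :
    HasDerivAt (curvature γ)
      (⟪cross3 v₁ v₂, cross3 v₁ v₃⟫ / (‖cross3 v₁ v₂‖ * ‖v₁‖ ^ 3) -
        3 * ‖cross3 v₁ v₂‖ * ⟪v₁, v₂⟫ / ‖v₁‖ ^ 5) t := by
  have hv₁ : v₁ ≠ 0 := by
    rintro rfl
    exact hw (cross3_zero_left v₂)
  have e₁ := h₁.deriv
  have e₂ := h₂.deriv
  have hw' : HasDerivAt (fun u => cross3 (deriv γ u) (deriv (deriv γ) u)) (cross3 v₁ v₃) t :=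
    (h₂.cross3 h₃).congr_deriv (by rw [e₁, e₂, cross3_self, zero_add])
  have hn := hw'.norm (by rwa [e₁, e₂])
  have hd := (h₂.norm (by rwa [e₁])).fun_pow 3
  rw [e₁, e₂] at hn
  rw [e₁] at hd
  exact (hn.div hd (by rw [e₁]; positivity)).congr_deriv (by rw [e₁, e₂]; field_simp; ring)

theorem focalPoint_eq_focalFormula (h₁ : HasDerivAt γ v₁ t) (h₂ : HasDerivAt (deriv γ) v₂ t)
    (h₃ : HasDerivAt (deriv (deriv γ)) v₃ t) (hw : cross3 v₁ v₂ ≠ 0) :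
    focalPoint γ t = focalFormula (γ t) v₁ v₂ v₃ := by
  have hv₁ : ‖v₁‖ ≠ 0 := by
    rw [norm_ne_zero_iff]
    rintro rfl
    exact hw (cross3_zero_left v₂)
  have hw₀ : ‖cross3 v₁ v₂‖ ≠ 0 := norm_ne_zero_iff.2 hw
  rw [focalPoint, normal, binormal, unitTangent, (hasDerivAt_curvature h₁ h₂ h₃ hw).deriv,
    torsion, curvature, h₁.deriv, h₂.deriv, h₃.deriv, cross3_smul_smul, smul_smul, smul_smul,
    focalFormula]
  congr 2
  · field_simp
  · by_cases hdet : ⟪cross3 v₁ v₂, v₃⟫ = 0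
    · simp [hdet]
    · field_simp
      ring

end

section Rotation

def rotZ (θ : ℝ) (v : E3) : E3 :=
  mk3 (cos θ * v 0 - sin θ * v 1) (sin θ * v 0 + cos θ * v 1) (v 2)

variable (θ : ℝ)

lemma rotZ_add (u v : E3) : rotZ θ (u + v) = rotZ θ u + rotZ θ v := by
  simp only [rotZ, mk3_add, PiLp.add_apply]
  refine mk3_ext ?_ ?_ ?_ <;> ring

lemma rotZ_smul (r : ℝ) (v : E3) : rotZ θ (r • v) = r • rotZ θ v := by
  simp only [rotZ, smul_mk3, PiLp.smul_apply, smul_eq_mul]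
  refine mk3_ext ?_ ?_ ?_ <;> ring

lemma inner_rotZ (u v : E3) : ⟪rotZ θ u, rotZ θ v⟫ = ⟪u, v⟫ := by
  rw [rotZ, rotZ, inner_mk3, inner_E3]
  linear_combination (u 0 * v 0 + u 1 * v 1) * sin_sq_add_cos_sq θ

lemma norm_rotZ (v : E3) : ‖rotZ θ v‖ = ‖v‖ := by
  rw [norm_eq_sqrt_real_inner, norm_eq_sqrt_real_inner, inner_rotZ]

lemma cross3_rotZ (u v : E3) : cross3 (rotZ θ u) (rotZ θ v) = rotZ θ (cross3 u v) := by
  simp only [rotZ, cross3, mk3_apply_zero, mk3_apply_one, mk3_apply_two]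
  refine mk3_ext ?_ ?_ ?_
  · ring
  · ring
  · linear_combination (u 0 * v 1 - u 1 * v 0) * sin_sq_add_cos_sq θ

lemma focalFormula_rotZ (x v₁ v₂ v₃ : E3) :
    focalFormula (rotZ θ x) (rotZ θ v₁) (rotZ θ v₂) (rotZ θ v₃) =
      rotZ θ (focalFormula x v₁ v₂ v₃) := by
  simp only [focalFormula, cross3_rotZ, norm_rotZ, inner_rotZ, rotZ_add, rotZ_smul]

lemma hasDerivAt_rotZ {p : ℝ → E3} {p' : E3} {s : ℝ} (hp : HasDerivAt p p' s) :
    HasDerivAt (fun u => rotZ u (p u)) (rotZ s (p' + cross3 e₃ (p s))) s := by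
  rw [hasDerivAt_E3_iff] at hp
  refine (hasDerivAt_mk3_s13
    (((hasDerivAt_cos s).mul (hp 0)).sub ((hasDerivAt_sin s).mul (hp 1)))
    (((hasDerivAt_sin s).mul (hp 0)).add ((hasDerivAt_cos s).mul (hp 1))) (hp 2)).congr_deriv ?_
  simp only [rotZ, e₃, cross3, PiLp.add_apply, mk3_apply_zero, mk3_apply_one, mk3_apply_two]
  refine mk3_ext ?_ ?_ ?_ <;> ring

end Rotation

def trigCurve (n : ℝ) (P Q R : E3) (u : ℝ) : E3 :=
  P + cos (n * u) • Q + sin (n * u) • R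

section TrigCurve

variable (n : ℝ) (P Q R : E3)

lemma hasDerivAt_trigCurve (s : ℝ) :
    HasDerivAt (trigCurve n P Q R) ((n * cos (n * s)) • R - (n * sin (n * s)) • Q) s := by
  have hnu := (hasDerivAt_id s).const_mul n
  refine (((hasDerivAt_const s P).add (hnu.cos.smul_const Q)).add
    (hnu.sin.smul_const R)).congr_deriv ?_
  simp only [id, mul_one, zero_add]
  module

lemma hasDerivAt_rotZ_trigCurve (s : ℝ) :
    HasDerivAt (fun u => rotZ u (trigCurve n P Q R u))
      (rotZ s (trigCurve n (cross3 e₃ P) (cross3 e₃ Q + n • R) (cross3 e₃ R - n • Q) s)) s := by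
  refine (hasDerivAt_rotZ (hasDerivAt_trigCurve n P Q R s)).congr_deriv ?_
  congr 1
  refine E3.ext_of_apply ?_ ?_ ?_ <;>
  · simp only [trigCurve, cross3, e₃, PiLp.add_apply, PiLp.sub_apply, PiLp.smul_apply, smul_eq_mul,
        mk3_apply_zero, mk3_apply_one, mk3_apply_two, Fin.isValue]
    ring

lemma deriv_rotZ_trigCurve :
    deriv (fun u => rotZ u (trigCurve n P Q R u)) =
      fun u => rotZ u (trigCurve n (cross3 e₃ P) (cross3 e₃ Q + n • R) (cross3 e₃ R - n • Q) u) :=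
  funext fun s => (hasDerivAt_rotZ_trigCurve n P Q R s).deriv

lemma differentiable_rotZ_trigCurve : Differentiable ℝ (fun u => rotZ u (trigCurve n P Q R u)) :=
  fun s => (hasDerivAt_rotZ_trigCurve n P Q R s).differentiableAt

end TrigCurve

lemma toroidalHelix_eq_rotZ (a b n u : ℝ) :
    mk3 ((a + b * cos (n * u)) * cos u) ((a + b * cos (n * u)) * sin u) (b * sin (n * u)) =
      rotZ u (trigCurve n (mk3 a 0 0) (mk3 b 0 0) (mk3 0 0 b) u) := by
  simp only [rotZ, trigCurve, smul_mk3, mk3_add, mk3_apply_zero, mk3_apply_one, mk3_apply_two]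
  refine mk3_ext ?_ ?_ ?_ <;> ring

lemma add_div_mul_add_div_mul_eq_div {g x w Q W K det k D N : ℝ} (hW : W ≠ 0)
    (hdet : det = k * D) (hdet0 : det ≠ 0) (h : W * det * g + Q * det * x + K * w = k * W * N) :
    g + Q / W * x + K / (W * det) * w = N / D := by
  subst hdet
  have hk : k ≠ 0 := left_ne_zero_of_mul hdet0
  have hD : D ≠ 0 := right_ne_zero_of_mul hdet0
  field_simp
  linear_combination h

/-- `v₀, …, v₃` are the toroidal helix and its first three derivatives at `t`, seen in the frame
rotating with it about the `z`-axis; `θ = n t`. -/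
lemma focalFormula_toroidalProfile {a b n θ D : ℝ} {v₀ v₁ v₂ v₃ : E3}
    (hD : D = (4 * a ^ 2 * (n ^ 2 - 1) - b ^ 2 * (8 * n ^ 4 + 13 * n ^ 2 + 3)) * cos θ +
      b * (4 * a * (n ^ 4 - 1) - 4 * a * (2 * n ^ 2 + 1) * cos (2 * θ) +
        b * (n ^ 2 - 1) * cos (3 * θ)))
    (hv₀ : v₀ = mk3 (a + b * cos θ) 0 (b * sin θ))
    (hv₁ : v₁ = mk3 (-(b * n * sin θ)) (a + b * cos θ) (b * n * cos θ))
    (hv₂ : v₂ = mk3 (-a - b * (n ^ 2 + 1) * cos θ) (-(2 * b * n * sin θ)) (-(b * n ^ 2 * sin θ)))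
    (hv₃ : v₃ =
      mk3 (b * n * (n ^ 2 + 3) * sin θ) (-a - b * (3 * n ^ 2 + 1) * cos θ) (-(b * n ^ 3 * cos θ)))
    (hdet : ⟪cross3 v₁ v₂, v₃⟫ ≠ 0) :
    focalFormula v₀ v₁ v₂ v₃ =
      mk3 (4 * a * b * n ^ 2 * (a * (n ^ 2 - 1) - b * (2 * n ^ 2 + 1) * cos θ) / D)
        (-(12 * a * b ^ 2 * n ^ 3 * sin θ) / D)
        (2 * a * sin θ * (-(2 * a ^ 2 * (n ^ 2 - 1)) + 4 * a * b * (2 * n ^ 2 + 1) * cos θ -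
          b ^ 2 * (n ^ 2 - 1) * cos (2 * θ) + b ^ 2 * (11 * n ^ 2 + 1)) / D) := by
  have hcs := sin_sq_add_cos_sq θ
  have hdetD : ⟪cross3 v₁ v₂, v₃⟫ = -(b * n) / 4 * D := by
    rw [hD, cos_two_mul, cos_three_mul, hv₁, hv₂, hv₃, cross3_mk3, inner_mk3]
    grind
  have hW : ‖cross3 v₁ v₂‖ ^ 2 ≠ 0 := by
    intro h
    rw [sq_eq_zero_iff, norm_eq_zero] at h
    rw [h, inner_zero_left] at hdet
    exact hdet rfl
  rw [focalFormula]
  refine E3.ext_of_apply ?_ ?_ ?_ <;>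
  · simp only [PiLp.add_apply, PiLp.smul_apply, smul_eq_mul, mk3_apply_zero, mk3_apply_one,
      mk3_apply_two]
    refine add_div_mul_add_div_mul_eq_div hW hdetD hdet ?_
    clear hW hdet hdetD hD
    subst hv₀ hv₁ hv₂ hv₃
    simp only [← real_inner_self_eq_norm_sq, cross3_mk3, inner_mk3, mk3_apply_zero,
      mk3_apply_one, mk3_apply_two, cos_two_mul]
    grind

open Real in
theorem focal_curve_of_toroidal_helix_general
    (a b n : ℝ)
    (γ : ℝ → E3)
    (hγ : ∀ t, γ t = mk3 ((a + b * cos (n * t)) * cos t)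
      ((a + b * cos (n * t)) * sin t) (b * sin (n * t)))
    (κ τ : ℝ → ℝ)
    (hκ : ∀ u, κ u = ‖cross3 (deriv γ u) (deriv (deriv γ) u)‖ / ‖deriv γ u‖ ^ 3)
    (hτ : ∀ u, τ u =
      ⟪cross3 (deriv γ u) (deriv (deriv γ) u), deriv (deriv (deriv γ)) u⟫ /
        ‖cross3 (deriv γ u) (deriv (deriv γ) u)‖ ^ 2)
    (t : ℝ) (hτ0 : τ t ≠ 0)
    (D : ℝ)
    (hD : D = (4 * a ^ 2 * (n ^ 2 - 1) - b ^ 2 * (8 * n ^ 4 + 13 * n ^ 2 + 3)) * cos (n * t) +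
      b * (4 * a * (n ^ 4 - 1) - 4 * a * (2 * n ^ 2 + 1) * cos (2 * (n * t)) +
        b * (n ^ 2 - 1) * cos (3 * (n * t))))
    (T B N : E3) (c₁ c₂ : ℝ)
    (hT : T = ‖deriv γ t‖⁻¹ • deriv γ t)
    (hB : B = ‖cross3 (deriv γ t) (deriv (deriv γ) t)‖⁻¹ •
      cross3 (deriv γ t) (deriv (deriv γ) t))
    (hN : N = cross3 B T)
    (hc₁ : c₁ = (κ t)⁻¹)
    (hc₂ : c₂ = -deriv κ t / (‖deriv γ t‖ * κ t ^ 2 * τ t)) :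
    γ t + c₁ • N + c₂ • B =
      mk3
        (4 * a * b * n ^ 2 *
          (cos t * (a * (n ^ 2 - 1) - b * (2 * n ^ 2 + 1) * cos (n * t)) +
            3 * b * n * sin t * sin (n * t)) / D)
        (4 * a * b * n ^ 2 *
          (sin t * (a * (n ^ 2 - 1) - b * (2 * n ^ 2 + 1) * cos (n * t)) -
            3 * b * n * cos t * sin (n * t)) / D)
        (2 * a * sin (n * t) *
          (-(2 * a ^ 2 * (n ^ 2 - 1)) + 4 * a * b * (2 * n ^ 2 + 1) * cos (n * t) -
            b ^ 2 * (n ^ 2 - 1) * cos (2 * (n * t)) + b ^ 2 * (11 * n ^ 2 + 1)) / D) := by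
  have hγ' : γ = fun u => rotZ u (trigCurve n (mk3 a 0 0) (mk3 b 0 0) (mk3 0 0 b) u) :=
    funext fun u => (hγ u).trans (toroidalHelix_eq_rotZ a b n u)
  have hd₁ : Differentiable ℝ γ := by
    rw [hγ']
    exact differentiable_rotZ_trigCurve n _ _ _
  have hd₂ : Differentiable ℝ (deriv γ) := by
    rw [hγ', deriv_rotZ_trigCurve]
    exact differentiable_rotZ_trigCurve n _ _ _
  have hd₃ : Differentiable ℝ (deriv (deriv γ)) := by
    rw [hγ', deriv_rotZ_trigCurve, deriv_rotZ_trigCurve]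
    exact differentiable_rotZ_trigCurve n _ _ _
  obtain rfl : κ = curvature γ := funext hκ
  obtain rfl : τ = torsion γ := funext hτ
  have hdet := (div_ne_zero_iff.1 hτ0).1
  have hw : cross3 (deriv γ t) (deriv (deriv γ) t) ≠ 0 :=
    fun h => hdet (by rw [h, inner_zero_left])
  subst hT hB hN hc₁ hc₂
  change focalPoint γ t = _
  rw [focalPoint_eq_focalFormula (hd₁ t).hasDerivAt (hd₂ t).hasDerivAt (hd₃ t).hasDerivAt hw]
  simp only [hγ', deriv_rotZ_trigCurve, cross3_rotZ, inner_rotZ] at hdet ⊢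
  rw [focalFormula_rotZ, focalFormula_toroidalProfile hD ?_ ?_ ?_ ?_ hdet]
  · refine E3.ext_of_apply ?_ ?_ ?_ <;> simp only [rotZ, mk3_apply_zero, mk3_apply_one,
      mk3_apply_two] <;> ring
  all_goals
    refine E3.ext_of_apply ?_ ?_ ?_ <;>
    · simp only [trigCurve, cross3, e₃, PiLp.add_apply, PiLp.sub_apply, PiLp.smul_apply, smul_eq_mul,
        mk3_apply_zero, mk3_apply_one, mk3_apply_two, Fin.isValue]
      ring

open Real in
/-- The focal curve `C_γ = γ + c₁N + c₂B` of the toroidal helix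
`γ(t) = ((a + b cos nt)cos t, (a + b cos nt)sin t, b sin nt)` is given, at every point where the
curvature and torsion of `γ` and the denominator `D` are nonzero, by the explicit coordinates
`(x_β(t), y_β(t), f̃(t))`. -/
theorem focal_curve_of_toroidal_helix
    (a b n : ℝ) (ha : a > 0) (hb : b > 0) (hn : n > 0)
    (γ : ℝ → E3)
    (hγ : ∀ t, γ t = mk3 ((a + b * cos (n * t)) * cos t)
      ((a + b * cos (n * t)) * sin t) (b * sin (n * t)))
    (κ τ : ℝ → ℝ)
    (hκ : ∀ u, κ u = ‖cross3 (deriv γ u) (deriv (deriv γ) u)‖ / ‖deriv γ u‖ ^ 3)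
    (hτ : ∀ u, τ u =
      ⟪cross3 (deriv γ u) (deriv (deriv γ) u), deriv (deriv (deriv γ)) u⟫ /
        ‖cross3 (deriv γ u) (deriv (deriv γ) u)‖ ^ 2)
    (t : ℝ) (hκ0 : κ t ≠ 0) (hτ0 : τ t ≠ 0)
    (D : ℝ)
    (hD : D = (4 * a ^ 2 * (n ^ 2 - 1) - b ^ 2 * (8 * n ^ 4 + 13 * n ^ 2 + 3)) * cos (n * t) +
      b * (4 * a * (n ^ 4 - 1) - 4 * a * (2 * n ^ 2 + 1) * cos (2 * (n * t)) +
        b * (n ^ 2 - 1) * cos (3 * (n * t))))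
    (hD0 : D ≠ 0)
    (T B N : E3) (c₁ c₂ : ℝ)
    (hT : T = ‖deriv γ t‖⁻¹ • deriv γ t)
    (hB : B = ‖cross3 (deriv γ t) (deriv (deriv γ) t)‖⁻¹ •
      cross3 (deriv γ t) (deriv (deriv γ) t))
    (hN : N = cross3 B T)
    (hc₁ : c₁ = (κ t)⁻¹)
    (hc₂ : c₂ = -deriv κ t / (‖deriv γ t‖ * κ t ^ 2 * τ t)) :
    γ t + c₁ • N + c₂ • B =
      mk3
        (4 * a * b * n ^ 2 *
          (cos t * (a * (n ^ 2 - 1) - b * (2 * n ^ 2 + 1) * cos (n * t)) +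
            3 * b * n * sin t * sin (n * t)) / D)
        (4 * a * b * n ^ 2 *
          (sin t * (a * (n ^ 2 - 1) - b * (2 * n ^ 2 + 1) * cos (n * t)) -
            3 * b * n * cos t * sin (n * t)) / D)
        (2 * a * sin (n * t) *
          (-(2 * a ^ 2 * (n ^ 2 - 1)) + 4 * a * b * (2 * n ^ 2 + 1) * cos (n * t) -
            b ^ 2 * (n ^ 2 - 1) * cos (2 * (n * t)) + b ^ 2 * (11 * n ^ 2 + 1)) / D) :=
  focal_curve_of_toroidal_helix_general a b n γ hγ κ τ hκ hτ t hτ0 D hD T B N c₁ c₂ hT hB hN hc₁ hc₂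
end
end
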